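/- If E is an input type of system F, then E is an output type of system F. -/
import Mathlib


/-!
Common development: pure λ-calculus in de Bruijn notation, β-reduction,
weak head reduction, types of system F (with type constants), the typing
systems F, F₀ (F without (∀e)) and the simple system S, saturated sets and
interpretations, and the notions of input / output / data types, following
Farkh-Nour, "Les types de données syntaxiques du système F".
-/

namespace FarkhNour

/-- Pure λ-terms, in de Bruijn notation. -/
inductive Trm : Type
  | var : ℕ → Trm
  | app : Trm → Trm → Trm
  | lam : Trm → Trm

/-- Lift (shift) by `d` the free variables of a term, starting at index `k`. -/
def liftTrm (d : ℕ) : ℕ → Trm → Trm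
  | k, .var n => if n < k then .var n else .var (n + d)
  | k, .app a b => .app (liftTrm d k a) (liftTrm d k b)
  | k, .lam a => .lam (liftTrm d (k + 1) a)

/-- β-substitution `t[u/k]` (the binder for `k` is consumed: variables above `k`
are decremented), as used in the β-reduction rule. -/
def substTrm : Trm → ℕ → Trm → Trm
  | .var n, k, u => if n < k then .var n else if n = k then liftTrm k 0 u else .var (n - 1)
  | .app a b, k, u => .app (substTrm a k u) (substTrm b k u)
  | .lam a, k, u => .lam (substTrm a (k + 1) u)

/-- Named-style capture-avoiding substitution `t[u/x]` of the term `u` for the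
free variable `x` of `t` : the other free variables are left unchanged. -/
def replaceVar : Trm → ℕ → Trm → Trm
  | .var n, k, u => if n = k then u else .var n
  | .app a b, k, u => .app (replaceVar a k u) (replaceVar b k u)
  | .lam a, k, u => .lam (replaceVar a (k + 1) (liftTrm 1 0 u))

/-- Lifting of a parallel substitution under a binder. -/
def liftSub (σ : ℕ → Trm) : ℕ → Trm
  | 0 => .var 0
  | n + 1 => liftTrm 1 0 (σ n)

/-- Simultaneous (parallel) capture-avoiding substitution. -/
def msubst (σ : ℕ → Trm) : Trm → Trm
  | .var n => σ n
  | .app a b => .app (msubst σ a) (msubst σ b)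
  | .lam a => .lam (msubst (liftSub σ) a)

/-- One step of β-reduction. -/
inductive BetaStep : Trm → Trm → Prop
  | beta (t u : Trm) : BetaStep (.app (.lam t) u) (substTrm t 0 u)
  | appL {t t' : Trm} (u : Trm) : BetaStep t t' → BetaStep (.app t u) (.app t' u)
  | appR (t : Trm) {u u' : Trm} : BetaStep u u' → BetaStep (.app t u) (.app t u')
  | lam {t t' : Trm} : BetaStep t t' → BetaStep (.lam t) (.lam t')

/-- Many-step β-reduction `t →β t'`. -/
def BetaRed : Trm → Trm → Prop := Relation.ReflTransGen BetaStep

/-- β-equivalence `t ≃β t'`. -/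
def BetaEq : Trm → Trm → Prop := Relation.EqvGen BetaStep

/-- A term is normal iff no β-reduction step applies to it. -/
def IsNormal (t : Trm) : Prop := ∀ u, ¬ BetaStep t u

/-- `FreeIn k t` : the variable (de Bruijn index) `k` occurs free in `t`. -/
def FreeIn : ℕ → Trm → Prop
  | k, .var n => n = k
  | k, .app a b => FreeIn k a ∨ FreeIn k b
  | k, .lam a => FreeIn (k + 1) a

/-- A closed term. -/
def TrmClosed (t : Trm) : Prop := ∀ k, ¬ FreeIn k t

/-- One step of weak head reduction. -/
inductive WHStep : Trm → Trm → Prop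
  | beta (t u : Trm) : WHStep (.app (.lam t) u) (substTrm t 0 u)
  | app {t t' : Trm} (u : Trm) : WHStep t t' → WHStep (.app t u) (.app t' u)

/-- Weak head reduction `t ≻_f t'`. -/
def WHRed : Trm → Trm → Prop := Relation.ReflTransGen WHStep

/-- Types of system F, in de Bruijn notation, with type constants
(the constant `0` is the distinguished constant `O`, the constant `1` is `⊥`). -/
inductive Ty : Type
  | var : ℕ → Ty
  | const : ℕ → Ty
  | arr : Ty → Ty → Ty
  | all : Ty → Ty

/-- The distinguished type constant `O`. -/
def tyO : Ty := .const 0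

/-- The distinguished type constant `⊥`. -/
def tyBot : Ty := .const 1

/-- Lift (shift) by `d` the free type variables, starting at index `k`. -/
def liftTy (d : ℕ) : ℕ → Ty → Ty
  | k, .var n => if n < k then .var n else .var (n + d)
  | _, .const c => .const c
  | k, .arr a b => .arr (liftTy d k a) (liftTy d k b)
  | k, .all a => .all (liftTy d (k + 1) a)

/-- Capture-avoiding type substitution `A[G/k]`. -/
def substTy : Ty → ℕ → Ty → Ty
  | .var n, k, G => if n < k then .var n else if n = k then liftTy k 0 G else .var (n - 1)
  | .const c, _, _ => .const c
  | .arr a b, k, G => .arr (substTy a k G) (substTy b k G)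
  | .all a, k, G => .all (substTy a (k + 1) G)

/-- `TyFreeIn k A` : the type variable `k` occurs free in `A`. -/
def TyFreeIn : ℕ → Ty → Prop
  | k, .var n => n = k
  | _, .const _ => False
  | k, .arr a b => TyFreeIn k a ∨ TyFreeIn k b
  | k, .all a => TyFreeIn (k + 1) a

/-- Boolean version of `TyFreeIn`. -/
def tyFreeInB : ℕ → Ty → Bool
  | k, .var n => n == k
  | _, .const _ => false
  | k, .arr a b => tyFreeInB k a || tyFreeInB k b
  | k, .all a => tyFreeInB (k + 1) a

/-- A closed type. -/
def TyClosed (A : Ty) : Prop := ∀ k, ¬ TyFreeIn k A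

/-- `ContainsConst c A` : the type constant `c` occurs in `A`. -/
def ContainsConst : ℕ → Ty → Prop
  | _, .var _ => False
  | c, .const c' => c' = c
  | c, .arr a b => ContainsConst c a ∨ ContainsConst c b
  | c, .all a => ContainsConst c a

/-- The typing judgment `Γ ⊢_F t : A` of system F, with rules
(ax), (→i), (→e), (∀i), (∀e). -/
inductive TypF : List Ty → Trm → Ty → Prop
  | var (Γ : List Ty) (n : ℕ) (A : Ty) : Γ[n]? = some A → TypF Γ (.var n) A
  | abs {Γ : List Ty} {t : Trm} {B C : Ty} :
      TypF (B :: Γ) t C → TypF Γ (.lam t) (.arr B C)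
  | app {Γ : List Ty} {u v : Trm} {B C : Ty} :
      TypF Γ u (.arr B C) → TypF Γ v B → TypF Γ (.app u v) C
  | allI {Γ : List Ty} {t : Trm} {A : Ty} :
      TypF (Γ.map (liftTy 1 0)) t A → TypF Γ t (.all A)
  | allE {Γ : List Ty} {t : Trm} {A : Ty} (G : Ty) :
      TypF Γ t (.all A) → TypF Γ t (substTy A 0 G)

/-- The typing judgment `Γ ⊢_{F₀} t : A` of system F₀, i.e. system F
without the rule (∀e). -/
inductive TypF0 : List Ty → Trm → Ty → Prop
  | var (Γ : List Ty) (n : ℕ) (A : Ty) : Γ[n]? = some A → TypF0 Γ (.var n) A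
  | abs {Γ : List Ty} {t : Trm} {B C : Ty} :
      TypF0 (B :: Γ) t C → TypF0 Γ (.lam t) (.arr B C)
  | app {Γ : List Ty} {u v : Trm} {B C : Ty} :
      TypF0 Γ u (.arr B C) → TypF0 Γ v B → TypF0 Γ (.app u v) C
  | allI {Γ : List Ty} {t : Trm} {A : Ty} :
      TypF0 (Γ.map (liftTy 1 0)) t A → TypF0 Γ t (.all A)

/-- The typing judgment `Γ ⊢_S t : A` of the simple type system S,
with rules (ax), (→i), (→e) only. -/
inductive TypS : List Ty → Trm → Ty → Prop
  | var (Γ : List Ty) (n : ℕ) (A : Ty) : Γ[n]? = some A → TypS Γ (.var n) A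
  | abs {Γ : List Ty} {t : Trm} {B C : Ty} :
      TypS (B :: Γ) t C → TypS Γ (.lam t) (.arr B C)
  | app {Γ : List Ty} {u v : Trm} {B C : Ty} :
      TypS Γ u (.arr B C) → TypS Γ v B → TypS Γ (.app u v) C

/-- Quantifier-free types (types of the simple type system S). -/
def QFree : Ty → Prop
  | .var _ => True
  | .const _ => True
  | .arr a b => QFree a ∧ QFree b
  | .all _ => False

/-- An input type : a closed type all of whose normal inhabitants are
typable in system F₀. -/
def IsInputType (E : Ty) : Prop :=
  TyClosed E ∧ ∀ t : Trm, IsNormal t → TypF [] t E → TypF0 [] t E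

/-- An output type : a closed type `S` not containing the constant `O` such
that for every normal term `t`, if `α : O ⊢_F t : S` then `α ∉ Fv(t)`. -/
def IsOutputType (S : Ty) : Prop :=
  TyClosed S ∧ ¬ ContainsConst 0 S ∧
    ∀ t : Trm, IsNormal t → TypF [tyO] t S → ¬ FreeIn 0 t

/-- A syntactical data type : a closed type which is both input and output. -/
def IsSyntacticalDataType (D : Ty) : Prop := IsInputType D ∧ IsOutputType D

mutual
  /-- The ∀⁺ types (positive quantifiers). -/
  inductive PosTy : Ty → Prop
    | var (n : ℕ) : PosTy (.var n)
    | arr {B A : Ty} : NegTy B → PosTy A → PosTy (.arr B A)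
    | all {A : Ty} : PosTy A → TyFreeIn 0 A → PosTy (.all A)
  /-- The ∀⁻ types (negative quantifiers). -/
  inductive NegTy : Ty → Prop
    | var (n : ℕ) : NegTy (.var n)
    | arr {B A : Ty} : PosTy B → NegTy A → NegTy (.arr B A)
end

/-- `EndsInConst c A` : the type `A` ends in the type constant `c`. -/
inductive EndsInConst : ℕ → Ty → Prop
  | base (c : ℕ) : EndsInConst c (.const c)
  | arr {c : ℕ} {A : Ty} (B : Ty) : EndsInConst c A → EndsInConst c (.arr B A)
  | all {c : ℕ} {A : Ty} : EndsInConst c A → EndsInConst c (.all A)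

/-- `EndsInVar k A` : the type `A` ends in the type variable `k`
(crossing a quantifier ∀X with X ≠ the variable is allowed). -/
inductive EndsInVar : ℕ → Ty → Prop
  | base (k : ℕ) : EndsInVar k (.var k)
  | arr {k : ℕ} {A : Ty} (B : Ty) : EndsInVar k A → EndsInVar k (.arr B A)
  | all {k : ℕ} {A : Ty} : EndsInVar (k + 1) A → EndsInVar k (.all A)

/-- The side condition of the restricted rule (∀e)_F : the body `A` of `∀X A`
(the variable X having index `k`) is of the form
`∀X₀(A₁ → ∀X₁(A₂ → … → ∀X_{n-1}(A_n → ∀X_n Y)…))` with `Y = X` or one of the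
`A_i` ending in `X`. -/
inductive FFForm : ℕ → Ty → Prop
  | base (k : ℕ) : FFForm k (.var k)
  | all {k : ℕ} {A : Ty} : FFForm (k + 1) A → FFForm k (.all A)
  | arrTail {k : ℕ} {C : Ty} (B : Ty) : FFForm k C → FFForm k (.arr B C)
  | arrHit {k : ℕ} {B C : Ty} : EndsInVar k B → (∃ j, EndsInVar j C) →
      FFForm k (.arr B C)

/-- The typing judgment of system F_F : system F where the rule (∀e) is
replaced by the restricted rule (∀e)_F. -/
inductive TypFF : List Ty → Trm → Ty → Prop
  | var (Γ : List Ty) (n : ℕ) (A : Ty) : Γ[n]? = some A → TypFF Γ (.var n) A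
  | abs {Γ : List Ty} {t : Trm} {B C : Ty} :
      TypFF (B :: Γ) t C → TypFF Γ (.lam t) (.arr B C)
  | app {Γ : List Ty} {u v : Trm} {B C : Ty} :
      TypFF Γ u (.arr B C) → TypFF Γ v B → TypFF Γ (.app u v) C
  | allI {Γ : List Ty} {t : Trm} {A : Ty} :
      TypFF (Γ.map (liftTy 1 0)) t A → TypFF Γ t (.all A)
  | allE {Γ : List Ty} {t : Trm} {A : Ty} (G : Ty) :
      FFForm 0 A → TypFF Γ t (.all A) → TypFF Γ t (substTy A 0 G)

/-- An output type of system F_F. -/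
def IsOutputTypeFF (S : Ty) : Prop :=
  TyClosed S ∧ ¬ ContainsConst 0 S ∧
    ∀ t : Trm, IsNormal t → TypFF [tyO] t S → ¬ FreeIn 0 t

/-- Saturated sets of λ-terms. -/
def Saturated (G : Set Trm) : Prop := ∀ t u : Trm, WHRed t u → u ∈ G → t ∈ G

/-- `G → G'` on sets of λ-terms. -/
def SetArr (G G' : Set Trm) : Set Trm := {u : Trm | ∀ t ∈ G, Trm.app u t ∈ G'}

/-- Extension of an interpretation by a set for the (de Bruijn) variable 0. -/
def consEnv (G : Set Trm) (I : ℕ → Set Trm) : ℕ → Set Trm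
  | 0 => G
  | n + 1 => I n

/-- The value `|A|_I` of a type in an interpretation (`C` interprets the
type constants, `I` the type variables). -/
def TyVal (C : ℕ → Set Trm) : Ty → (ℕ → Set Trm) → Set Trm
  | .var n, I => I n
  | .const c, _ => C c
  | .arr a b, I => SetArr (TyVal C a I) (TyVal C b I)
  | .all a, I => {t : Trm | ∀ G : Set Trm, Saturated G → t ∈ TyVal C a (consEnv G I)}

/-- `|A|` : the intersection of the values of `A` under all interpretations
by saturated sets. -/
def TyGlobal (A : Ty) : Set Trm :=
  {t : Trm | ∀ C I : ℕ → Set Trm, (∀ c, Saturated (C c)) → (∀ n, Saturated (I n)) →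
    t ∈ TyVal C A I}

/-- A data type in Krivine's sense : a closed type `A` with `|A| ≠ ∅` such that
every term of `|A|` β-reduces to a closed term. -/
def IsDataType (A : Ty) : Prop :=
  TyClosed A ∧ TyGlobal A ≠ ∅ ∧
    ∀ t ∈ TyGlobal A, ∃ t' : Trm, BetaRed t t' ∧ TrmClosed t'

/-- The product type `A ∧ B = ∀X((A → (B → X)) → X)` (X fresh). -/
def tyAnd (A B : Ty) : Ty :=
  .all (.arr (.arr (liftTy 1 0 A) (.arr (liftTy 1 0 B) (.var 0))) (.var 0))

/-- The disjoint sum type `A ∨ B = ∀X((A → X) → ((B → X) → X))` (X fresh). -/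
def tyOr (A B : Ty) : Ty :=
  .all (.arr (.arr (liftTy 1 0 A) (.var 0))
    (.arr (.arr (liftTy 1 0 B) (.var 0)) (.var 0)))

/-- The type `LA = ∀X(X → ((A → (X → X)) → X))` of lists of objects of `A`. -/
def tyList (A : Ty) : Ty :=
  .all (.arr (.var 0)
    (.arr (.arr (liftTy 1 0 A) (.arr (.var 0) (.var 0))) (.var 0)))

/-- Negation `¬A = A → ⊥`. -/
def tyNeg (A : Ty) : Ty := .arr A tyBot

/-- The Gödel translation `A*` : every atomic subformula `R` is replaced
by `¬R`. -/
def godel : Ty → Ty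
  | .var n => .arr (.var n) tyBot
  | .const c => .arr (.const c) tyBot
  | .arr a b => .arr (godel a) (godel b)
  | .all a => .all (godel a)

/-- `T` is a storage operator for the pair of types `(E, S)`. -/
def IsStorageOpPair (T : Trm) (E S : Ty) : Prop :=
  TrmClosed T ∧
    ∀ t : Trm, TypF [] t E →
      ∃ τ τ' : Trm, BetaEq τ τ' ∧ TypF [] τ' S ∧
        ∀ θ : Trm, BetaEq θ t →
          ∀ f : ℕ, ¬ FreeIn f θ → ¬ FreeIn f τ →
            ∃ σ : ℕ → Trm,
              WHRed (.app (.app T θ) (.var f)) (.app (.var f) (msubst σ τ))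

/-- `T` is a storage operator for the type `D`. -/
def IsStorageOp (T : Trm) (D : Ty) : Prop := IsStorageOpPair T D D

/-- The term `λx₁…λxₙ.α` (n-fold abstraction over the free variable `α`). -/
def nlam (n a : ℕ) : Trm := Trm.lam^[n] (Trm.var (a + n))

/-- The term `p_n = λx₁…λxₙλx.x`. -/
def pTrm (n : ℕ) : Trm := Trm.lam^[n] (Trm.lam (Trm.var 0))

/-- `B₁ → … → B_n → A`. -/
def mkArr (Bs : List Ty) (A : Ty) : Ty := Bs.foldr Ty.arr A

/-- The length `Lg(E)` of a type : the number of occurrences of `→` in it. -/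
def Lg : Ty → ℕ
  | .var _ => 0
  | .const _ => 0
  | .arr a b => Lg a + Lg b + 1
  | .all a => Lg a

/-- `SubtypeOf A E` : `A` is a subtype (subformula) of `E`. -/
inductive SubtypeOf : Ty → Ty → Prop
  | refl (A : Ty) : SubtypeOf A A
  | arrL {A B C : Ty} : SubtypeOf A B → SubtypeOf A (.arr B C)
  | arrR {A B C : Ty} : SubtypeOf A C → SubtypeOf A (.arr B C)
  | all {A B : Ty} : SubtypeOf A B → SubtypeOf A (.all B)

/-- `InAppPos k t` : the variable `k` occurs in application (function)
position in `t`, i.e. some subterm of `t` is of the form `(k)u`. -/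
def InAppPos : ℕ → Trm → Prop
  | _, .var _ => False
  | k, .app u v => u = .var k ∨ InAppPos k u ∨ InAppPos k v
  | k, .lam u => InAppPos (k + 1) u

/-- The simple translation `A^s` : `X^s = X`, `(B → C)^s = B^s → C^s`,
`(∀X B)^s = B^s` (the variables freed by erasing the quantifiers are collapsed
onto the type variable `0`). `d` counts the erased quantifiers. -/
def eraseTyAux : ℕ → Ty → Ty
  | d, .var n => .var (n - d)
  | _, .const c => .const c
  | d, .arr a b => .arr (eraseTyAux d a) (eraseTyAux d b)
  | d, .all a => eraseTyAux (d + 1) a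

/-- The simple translation `A^s`. -/
def eraseTy : Ty → Ty := eraseTyAux 0

/-- The identity term `λx.x`. -/
def idTrm : Trm := .lam (.var 0)

/-- The boolean `𝟙 = λxλy.x`. -/
def oneTrm : Trm := .lam (.lam (.var 1))

/-- The pair of λ-terms `(T_F, T'_F)` associated with a type `F` (the
distinguished variable `X` having de Bruijn index `k`; the term variable `α`
is the free term variable `0`):
`T_F = T'_F = λx.x` if `X ∉ Fv(F)`;
`T_X = λxλβλg.(g)xα`, `T'_X = λx.(x)α𝟙`;
`T_{C→D} = λxλy.(T_D)(x)(T'_C)y`, `T'_{C→D} = λxλy.(T'_D)(x)(T_C)y`;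
`T_{∀Y B} = λx.(T_B)x`, `T'_{∀Y B} = λx.(T'_B)x`. -/
def TTpair : ℕ → Ty → Trm × Trm
  | k, .var n =>
      if n = k then
        (.lam (.lam (.lam (.app (.app (.var 0) (.var 2)) (.var 3)))),
         .lam (.app (.app (.var 0) (.var 1)) oneTrm))
      else (idTrm, idTrm)
  | _, .const _ => (idTrm, idTrm)
  | k, .arr C D =>
      if tyFreeInB k (.arr C D) then
        (.lam (.lam (.app (liftTrm 2 0 (TTpair k D).1)
            (.app (.var 1) (.app (liftTrm 2 0 (TTpair k C).2) (.var 0))))),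
         .lam (.lam (.app (liftTrm 2 0 (TTpair k D).2)
            (.app (.var 1) (.app (liftTrm 2 0 (TTpair k C).1) (.var 0))))))
      else (idTrm, idTrm)
  | k, .all B =>
      if tyFreeInB k (.all B) then
        (.lam (.app (liftTrm 1 0 (TTpair (k + 1) B).1) (.var 0)),
         .lam (.app (liftTrm 1 0 (TTpair (k + 1) B).2) (.var 0)))
      else (idTrm, idTrm)



/-! ### Auxiliary development for Statement 0 -/

/-- The closed type `(∀X X) → (∀X X)`. -/
def auxT0 : Ty := .arr (.all (.var 0)) (.all (.var 0))

/-- The term `δ = λx.(x)x`. -/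
def auxDelta : Trm := .lam (.app (.var 0) (.var 0))

lemma liftTy_auxT0 (d k : ℕ) : liftTy d k auxT0 = auxT0 := by
  simp [auxT0, liftTy]

lemma substTy_auxT0 (k : ℕ) (G : Ty) : substTy auxT0 k G = auxT0 := by
  simp [auxT0, substTy]

lemma liftTrm_auxDelta (d k : ℕ) : liftTrm d k auxDelta = auxDelta := by
  simp [auxDelta, liftTrm]

/-- Replace the constant `O` by `auxT0` in a type. -/
def constSub : Ty → Ty
  | .var n => .var n
  | .const c => if c = 0 then auxT0 else .const c
  | .arr a b => .arr (constSub a) (constSub b)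
  | .all a => .all (constSub a)

lemma constSub_lift (A : Ty) : ∀ d k, constSub (liftTy d k A) = liftTy d k (constSub A) := by
  induction A with
  | var n => intro d k; simp only [liftTy, constSub]; split <;> rfl
  | const c =>
      intro d k
      show constSub (.const c) = liftTy d k (constSub (.const c))
      by_cases h : c = 0 <;> simp [constSub, h, liftTy, liftTy_auxT0]
  | arr a b iha ihb => intro d k; simp [liftTy, constSub, iha, ihb]
  | all a ih => intro d k; simp [liftTy, constSub, ih]

lemma constSub_subst (A : Ty) : ∀ k G, constSub (substTy A k G) = substTy (constSub A) k (constSub G) := by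
  induction A with
  | var n =>
      intro k G
      by_cases h1 : n < k
      · simp [substTy, constSub, h1]
      · by_cases h2 : n = k
        · simp [substTy, constSub, h1, h2, constSub_lift]
        · simp [substTy, constSub, h1, h2]
  | const c =>
      intro k G
      by_cases h : c = 0 <;> simp [substTy, constSub, h, substTy_auxT0]
  | arr a b iha ihb => intro k G; simp [substTy, constSub, iha, ihb]
  | all a ih => intro k G; simp [substTy, constSub, ih]

lemma constSub_of_not_contains {A : Ty} (h : ¬ ContainsConst 0 A) : constSub A = A := by
  induction A with
  | var n => rfl
  | const c =>
      have hc : ¬ (c = 0) := h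
      simp [constSub, hc]
  | arr a b iha ihb =>
      have h' : ¬ (ContainsConst 0 a ∨ ContainsConst 0 b) := h
      push_neg at h'
      simp [constSub, iha h'.1, ihb h'.2]
  | all a ih =>
      have h' : ¬ ContainsConst 0 a := h
      simp [constSub, ih h']

lemma map_constSub_comm (Γ : List Ty) :
    (Γ.map (liftTy 1 0)).map constSub = (Γ.map constSub).map (liftTy 1 0) := by
  simp only [List.map_map]
  congr 1
  funext a
  exact constSub_lift a 1 0

lemma typF_constSub {Γ t A} (h : TypF Γ t A) : TypF (Γ.map constSub) t (constSub A) := by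
  induction h with
  | var Γ n A hA =>
      exact .var _ _ _ (by rw [List.getElem?_map, hA]; rfl)
  | abs _ ih => exact .abs ih
  | app _ _ ih1 ih2 => exact .app ih1 ih2
  | @allI Γ t A _ ih =>
      apply TypF.allI
      rw [← map_constSub_comm]
      exact ih
  | @allE Γ t A G _ ih =>
      rw [constSub_subst]
      exact .allE _ ih

/-- Types of the form `∀…∀ O`. -/
inductive OTy : Ty → Prop
  | o : OTy (.const 0)
  | all {A} : OTy A → OTy (.all A)

lemma OTy.lift {A} (h : OTy A) : ∀ d k, OTy (liftTy d k A) := by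
  induction h with
  | o => intro d k; exact .o
  | all _ ih => intro d k; exact .all (ih d (k + 1))

lemma OTy.substTy' {A} (h : OTy A) : ∀ k G, OTy (substTy A k G) := by
  induction h with
  | o => intro k G; exact .o
  | all _ ih => intro k G; exact .all (ih (k + 1) G)

lemma typF_var_O {Γ t A} (h : TypF Γ t A) :
    ∀ n, t = .var n → Γ[n]? = some tyO → OTy A := by
  induction h with
  | var Γ m B hB =>
      intro n ht hΓ
      injection ht with hmn
      subst hmn
      rw [hB] at hΓ
      injection hΓ with h2
      rw [h2]
      exact .o
  | abs => intro n ht _; cases ht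
  | app => intro n ht _; cases ht
  | allI _ ih =>
      intro n ht hΓ
      exact .all (ih n ht (by rw [List.getElem?_map, hΓ]; rfl))
  | allE G _ ih =>
      intro n ht hΓ
      have h' := ih n ht hΓ
      cases h' with
      | all h'' => exact h''.substTy' 0 G

lemma typF_no_app_pos {Γ t A} (h : TypF Γ t A) :
    ∀ k, Γ[k]? = some tyO → ¬ InAppPos k t := by
  induction h with
  | var => intro k hk h; exact h
  | abs _ ih =>
      intro k hk h
      exact ih (k + 1) (by rw [List.getElem?_cons_succ]; exact hk) h
  | @app Γ u v B C hu hv ihu ihv =>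
      intro k hk h
      have h' : u = .var k ∨ InAppPos k u ∨ InAppPos k v := h
      rcases h' with h' | h' | h'
      · have := typF_var_O hu k h' hk
        cases this
      · exact ihu k hk h'
      · exact ihv k hk h'
  | allI _ ih =>
      intro k hk h
      exact ih k (by rw [List.getElem?_map, hk]; rfl) h
  | allE G _ ih => intro k hk h; exact ih k hk h

lemma IsNormal.appL' {a b} (h : IsNormal (.app a b)) : IsNormal a :=
  fun u hu => h _ (.appL b hu)

lemma IsNormal.appR' {a b} (h : IsNormal (.app a b)) : IsNormal b :=
  fun u hu => h _ (.appR a hu)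

lemma IsNormal.lam' {a} (h : IsNormal (.lam a)) : IsNormal a :=
  fun u hu => h _ (.lam hu)

lemma IsNormal.not_lam_app {a b} (h : IsNormal (.app (.lam a) b)) : False :=
  h _ (.beta a b)

lemma var_normal {n : ℕ} : IsNormal (.var n) := by
  intro u hu; cases hu

lemma auxDelta_normal : IsNormal auxDelta := by
  intro u hu
  cases hu with
  | lam h =>
      cases h with
      | appL _ h' => cases h'
      | appR _ h' => cases h'

lemma substTrm_delta_not_lam {a : Trm} {k : ℕ} (h1 : a ≠ .var k) (h2 : ∀ a', a ≠ .lam a') :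
    ∀ t', substTrm a k auxDelta ≠ .lam t' := by
  cases a with
  | var n =>
      intro t' h
      by_cases hlt : n < k
      · simp [substTrm, hlt] at h
      · by_cases heq : n = k
        · exact h1 (by rw [heq])
        · simp [substTrm, hlt, heq] at h
  | app a b => intro t' h; simp [substTrm] at h
  | lam a => exact fun t' _ => h2 a rfl

lemma app_step_inv {sa sb u} (h : BetaStep (.app sa sb) u) :
    (∃ t, sa = .lam t) ∨ (∃ sa', BetaStep sa sa') ∨ (∃ sb', BetaStep sb sb') := by
  cases h with
  | beta t u => exact .inl ⟨t, rfl⟩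
  | appL _ h => exact .inr (.inl ⟨_, h⟩)
  | appR _ h => exact .inr (.inr ⟨_, h⟩)

lemma isNormal_substTrm_delta : ∀ (t : Trm) (k : ℕ), IsNormal t → ¬ InAppPos k t →
    IsNormal (substTrm t k auxDelta) := by
  intro t
  induction t with
  | var n =>
      intro k _ _
      by_cases hlt : n < k
      · rw [show substTrm (.var n) k auxDelta = .var n from by simp [substTrm, hlt]]
        exact var_normal
      · by_cases heq : n = k
        · rw [show substTrm (.var n) k auxDelta = auxDelta from by
            simp [substTrm, hlt, heq, liftTrm_auxDelta]]
          exact auxDelta_normal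
        · rw [show substTrm (.var n) k auxDelta = .var (n - 1) from by
            simp [substTrm, hlt, heq]]
          exact var_normal
  | app a b iha ihb =>
      intro k hn hap
      have hap' : ¬(a = .var k ∨ InAppPos k a ∨ InAppPos k b) := hap
      push_neg at hap'
      obtain ⟨h1, h2, h3⟩ := hap'
      intro u hu
      have hu' : BetaStep (.app (substTrm a k auxDelta) (substTrm b k auxDelta)) u := hu
      rcases app_step_inv hu' with ⟨t', hlam⟩ | ⟨sa', hs⟩ | ⟨sb', hs⟩
      · have hnl : ∀ a', a ≠ .lam a' := by
          intro a' ha'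
          rw [ha'] at hn
          exact hn.not_lam_app
        exact substTrm_delta_not_lam h1 hnl t' hlam
      · exact iha k hn.appL' h2 _ hs
      · exact ihb k hn.appR' h3 _ hs
  | lam a ih =>
      intro k hn hap u hu
      have hu' : BetaStep (.lam (substTrm a (k + 1) auxDelta)) u := hu
      cases hu' with
      | lam h => exact ih (k + 1) hn.lam' (fun h' => hap h') _ h

/-- Skeletons of types (variables erased, quantifiers collapsed). -/
inductive Sk : Type
  | star : Sk
  | const : ℕ → Sk
  | arr : Sk → Sk → Sk

def sk : Ty → Sk
  | .var _ => .star
  | .const c => .const c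
  | .arr a b => .arr (sk a) (sk b)
  | .all a => sk a

def skSize : Sk → ℕ
  | .star => 1
  | .const _ => 1
  | .arr a b => skSize a + skSize b + 1

lemma sk_liftTy (A : Ty) : ∀ d k, sk (liftTy d k A) = sk A := by
  induction A with
  | var n => intro d k; simp only [liftTy]; split <;> rfl
  | const c => intro d k; rfl
  | arr a b iha ihb => intro d k; simp [liftTy, sk, iha, ihb]
  | all a ih => intro d k; simp [liftTy, sk, ih]

/-- `GenCl T A` : `A` is a generalization (∀-closure, with liftings) of `T`. -/
inductive GenCl : Ty → Ty → Prop
  | refl (T : Ty) : GenCl T T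
  | all {T A : Ty} : GenCl (liftTy 1 0 T) A → GenCl T (.all A)

lemma GenCl.sk_eq {T A} (h : GenCl T A) : sk A = sk T := by
  induction h with
  | refl => rfl
  | @all T A _ ih =>
      show sk A = sk T
      rw [ih, sk_liftTy]

lemma typF0_var_some {Γ t A} (h : TypF0 Γ t A) : ∀ n, t = .var n → ∃ T, Γ[n]? = some T := by
  induction h with
  | var Γ m B hB =>
      intro n ht
      injection ht with hmn
      subst hmn
      exact ⟨B, hB⟩
  | abs => intro n ht; cases ht
  | app => intro n ht; cases ht
  | @allI Γ t A _ ih =>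
      intro n ht
      obtain ⟨T, hT⟩ := ih n ht
      rw [List.getElem?_map] at hT
      cases hΓ : Γ[n]? with
      | none => rw [hΓ] at hT; simp at hT
      | some T0 => exact ⟨T0, rfl⟩

lemma typF0_var_gen {Γ t A} (h : TypF0 Γ t A) :
    ∀ n T, t = .var n → Γ[n]? = some T → GenCl T A := by
  induction h with
  | var Γ m B hB =>
      intro n T ht hT
      injection ht with hmn
      subst hmn
      rw [hB] at hT
      injection hT with h2
      subst h2
      exact .refl _
  | abs => intro n T ht _; cases ht
  | app => intro n T ht _; cases ht
  | @allI Γ t A _ ih =>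
      intro n T ht hT
      exact .all (ih n (liftTy 1 0 T) ht (by rw [List.getElem?_map, hT]; rfl))

lemma typF0_no_var_self_app {Γ t C} (h : TypF0 Γ t C) :
    t = .app (.var 0) (.var 0) → False := by
  induction h with
  | var => intro ht; cases ht
  | abs => intro ht; cases ht
  | @app Γ u v B C hu hv ihu ihv =>
      intro ht
      injection ht with h1 h2
      subst h1
      subst h2
      obtain ⟨T, hT⟩ := typF0_var_some hu 0 rfl
      have g1 := typF0_var_gen hu 0 T rfl hT
      have g2 := typF0_var_gen hv 0 T rfl hT
      cases g1 with
      | refl =>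
          have hsk : skSize (sk B) = skSize (sk (.arr B C)) := congrArg skSize g2.sk_eq
          simp [sk, skSize] at hsk
          omega
  | allI _ ih => exact ih

lemma typF0_no_delta {Γ t A} (h : TypF0 Γ t A) : t = auxDelta → False := by
  induction h with
  | var => intro ht; simp [auxDelta] at ht
  | app => intro ht; simp [auxDelta] at ht
  | abs h _ =>
      intro ht
      simp only [auxDelta] at ht
      injection ht with hb
      exact typF0_no_var_self_app h hb
  | allI _ ih => exact ih

lemma typF_delta (Γ : List Ty) : TypF Γ auxDelta auxT0 := by
  apply TypF.abs
  apply TypF.app (B := .all (.var 0))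
  · have h1 : TypF (.all (.var 0) :: Γ) (.var 0) (.all (.var 0)) := .var _ _ _ (by simp)
    have h2 := TypF.allE auxT0 h1
    have h3 : substTy (.var 0) 0 auxT0 = auxT0 := by
      simp [substTy, liftTy_auxT0]
    rw [h3] at h2
    exact h2
  · exact .var _ _ _ (by simp)

lemma typF_substTrm_delta {Γ t A} (h : TypF Γ t A) :
    ∀ Γ₁ Γ₂, Γ = Γ₁ ++ auxT0 :: Γ₂ →
      TypF (Γ₁ ++ Γ₂) (substTrm t Γ₁.length auxDelta) A := by
  induction h with
  | var Γ n A hA =>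
      intro Γ₁ Γ₂ hΓ
      subst hΓ
      rcases Nat.lt_trichotomy n Γ₁.length with hlt | heq | hgt
      · rw [show substTrm (.var n) Γ₁.length auxDelta = .var n from by simp [substTrm, hlt]]
        apply TypF.var
        rw [List.getElem?_append, if_pos hlt]
        rw [List.getElem?_append, if_pos hlt] at hA
        exact hA
      · rw [show substTrm (.var n) Γ₁.length auxDelta = auxDelta from by
          simp [substTrm, heq, liftTrm_auxDelta]]
        rw [heq, List.getElem?_append_right (le_refl _)] at hA
        simp at hA
        subst hA
        exact typF_delta _
      · have hnlt : ¬ n < Γ₁.length := by omega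
        have hne : ¬ n = Γ₁.length := by omega
        rw [show substTrm (.var n) Γ₁.length auxDelta = .var (n - 1) from by
          simp [substTrm, hnlt, hne]]
        apply TypF.var
        rw [List.getElem?_append_right (by omega : Γ₁.length ≤ n - 1)]
        rw [List.getElem?_append_right (by omega : Γ₁.length ≤ n)] at hA
        rw [show n - Γ₁.length = (n - 1 - Γ₁.length) + 1 from by omega] at hA
        rw [List.getElem?_cons_succ] at hA
        exact hA
  | @abs Γ t B C _ ih =>
      intro Γ₁ Γ₂ hΓ
      rw [show substTrm (.lam t) Γ₁.length auxDelta
            = .lam (substTrm t (Γ₁.length + 1) auxDelta) from rfl]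
      apply TypF.abs
      have := ih (B :: Γ₁) Γ₂ (by rw [hΓ]; rfl)
      exact this
  | app _ _ ihu ihv =>
      intro Γ₁ Γ₂ hΓ
      exact .app (ihu Γ₁ Γ₂ hΓ) (ihv Γ₁ Γ₂ hΓ)
  | @allI Γ t A _ ih =>
      intro Γ₁ Γ₂ hΓ
      apply TypF.allI
      have := ih (Γ₁.map (liftTy 1 0)) (Γ₂.map (liftTy 1 0)) (by
        rw [hΓ]
        simp [liftTy_auxT0])
      simpa using this
  | allE G _ ih =>
      intro Γ₁ Γ₂ hΓ
      exact .allE G (ih Γ₁ Γ₂ hΓ)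

/-- Subterm relation on λ-terms. -/
inductive SubtermOf : Trm → Trm → Prop
  | refl (t) : SubtermOf t t
  | appL {c u} (v) : SubtermOf c u → SubtermOf c (.app u v)
  | appR (u) {c v} : SubtermOf c v → SubtermOf c (.app u v)
  | lam {c u} : SubtermOf c u → SubtermOf c (.lam u)

lemma typF0_subterm {Γ s A} (h : TypF0 Γ s A) :
    ∀ c, SubtermOf c s → ∃ Γ' A', TypF0 Γ' c A' := by
  induction h with
  | var Γ n A hA =>
      intro c hc
      cases hc with
      | refl => exact ⟨Γ, A, .var Γ n A hA⟩
  | abs h ih =>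
      intro c hc
      cases hc with
      | refl => exact ⟨_, _, .abs h⟩
      | lam h' => exact ih c h'
  | app hu hv ihu ihv =>
      intro c hc
      cases hc with
      | refl => exact ⟨_, _, .app hu hv⟩
      | appL _ h' => exact ihu c h'
      | appR _ h' => exact ihv c h'
  | allI _ ih => exact ih

lemma subterm_delta_substTrm : ∀ (t : Trm) (k : ℕ), FreeIn k t →
    SubtermOf auxDelta (substTrm t k auxDelta) := by
  intro t
  induction t with
  | var n =>
      intro k hf
      have hf' : n = k := hf
      subst hf'
      rw [show substTrm (.var n) n auxDelta = auxDelta from by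
        simp [substTrm, liftTrm_auxDelta]]
      exact .refl _
  | app a b iha ihb =>
      intro k hf
      have hf' : FreeIn k a ∨ FreeIn k b := hf
      rcases hf' with h | h
      · exact .appL _ (iha k h)
      · exact .appR _ (ihb k h)
  | lam a ih =>
      intro k hf
      exact .lam (ih (k + 1) hf)

/-- If `E` is an input type of system F, then `E` is an output
type of system F. -/
theorem input_type_is_output_type (E : Ty) (hO : ¬ ContainsConst 0 E)
    (hE : IsInputType E) : IsOutputType E := by
  refine ⟨hE.1, hO, ?_⟩
  intro t ht hty hF
  have hnApp : ¬ InAppPos 0 t := typF_no_app_pos hty 0 rfl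
  have h1 : TypF [auxT0] t E := by
    have h0 := typF_constSub hty
    rw [constSub_of_not_contains hO] at h0
    exact h0
  have h2 : TypF [] (substTrm t 0 auxDelta) E := by
    have := typF_substTrm_delta h1 [] [] rfl
    simpa using this
  have h3 : IsNormal (substTrm t 0 auxDelta) := isNormal_substTrm_delta t 0 ht hnApp
  have h4 : TypF0 [] (substTrm t 0 auxDelta) E := hE.2 _ h3 h2
  obtain ⟨Γ', A', h5⟩ := typF0_subterm h4 auxDelta (subterm_delta_substTrm t 0 hF)
  exact typF0_no_delta h5 rfl

end FarkhNour
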